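/- arXiv:1205.2449 — 5 statements merged into one kernel-verified Lean document; each statement's English description precedes it below -/
import Mathlib

section
/- Let H be a real Hilbert space, let A : H →L[ℝ] H be a bounded self-adjoint linear operator with ⟨A x, x⟩ ≤ 0 for all x ∈ H, let τ > 0 and σ ≥ 1/2. If u, u' ∈ H satisfy the weighted-scheme relation u' - σ·τ·(A u') = u + (1-σ)·τ·(A u), then ‖u'‖ ≤ ‖u‖. Consequently any sequence (u^n) of iterates of the scheme satisfies ‖u^{n+1}‖ ≤ ‖u^n‖ ≤ ‖u^0‖ for all n. -/
/-! With the weighted average `w = σ u' + (1 - σ) u`, the scheme reads `u' - u = τ A w`, and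
`u' + u = 2 w + (1 - 2σ) τ A w`. Hence
`‖u'‖² - ‖u‖² = ⟪u' + u, u' - u⟫ = 2τ ⟪A w, w⟫ + (1 - 2σ) τ² ‖A w‖²`,
and both terms are nonpositive when `A ≤ 0`, `τ ≥ 0` and `σ ≥ 1/2`. -/

open scoped RealInnerProductSpace

section WeightedScheme

variable {H : Type*} [NormedAddCommGroup H] [InnerProductSpace ℝ H]

theorem norm_sq_sub_norm_sq_eq_inner (x y : H) : ‖x‖ ^ 2 - ‖y‖ ^ 2 = ⟪x + y, x - y⟫ := by
  simp only [inner_add_left, inner_sub_right, real_inner_self_eq_norm_sq, real_inner_comm x y]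
  ring

variable (A : H →ₗ[ℝ] H) {τ σ : ℝ} {u u' : H}

theorem weighted_step_sub_eq (h : u' - (σ * τ) • A u' = u + ((1 - σ) * τ) • A u) :
    u' - u = τ • A (σ • u' + (1 - σ) • u) := by
  simp only [map_add, map_smul, smul_add, smul_smul]
  linear_combination (norm := module) h

theorem weighted_step_add_eq (h : u' - (σ * τ) • A u' = u + ((1 - σ) * τ) • A u) :
    u' + u = (2 : ℝ) • (σ • u' + (1 - σ) • u) + (1 - 2 * σ) • τ • A (σ • u' + (1 - σ) • u) := by
  rw [← weighted_step_sub_eq A h]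
  module

theorem weighted_step_norm_sq_sub_norm_sq
    (h : u' - (σ * τ) • A u' = u + ((1 - σ) * τ) • A u) :
    ‖u'‖ ^ 2 - ‖u‖ ^ 2 = 2 * τ * ⟪A (σ • u' + (1 - σ) • u), σ • u' + (1 - σ) • u⟫
      + (1 - 2 * σ) * τ ^ 2 * ‖A (σ • u' + (1 - σ) • u)‖ ^ 2 := by
  rw [norm_sq_sub_norm_sq_eq_inner, weighted_step_add_eq A h, weighted_step_sub_eq A h]
  generalize σ • u' + (1 - σ) • u = w
  simp only [inner_add_left, real_inner_smul_left, real_inner_smul_right,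
    real_inner_self_eq_norm_sq, real_inner_comm w (A w)]
  ring

theorem norm_le_of_weighted_step (hA : ∀ x, ⟪A x, x⟫ ≤ 0) (hτ : 0 ≤ τ) (hσ : 1 / 2 ≤ σ)
    (h : u' - (σ * τ) • A u' = u + ((1 - σ) * τ) • A u) : ‖u'‖ ≤ ‖u‖ := by
  have hdiff := weighted_step_norm_sq_sub_norm_sq A h
  set w := σ • u' + (1 - σ) • u
  have hdissipation : 2 * τ * ⟪A w, w⟫ ≤ 0 :=
    mul_nonpos_of_nonneg_of_nonpos (by positivity) (hA w)
  have hdamping : (1 - 2 * σ) * τ ^ 2 * ‖A w‖ ^ 2 ≤ 0 :=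
    mul_nonpos_of_nonpos_of_nonneg (mul_nonpos_of_nonpos_of_nonneg (by linarith) (by positivity))
      (by positivity)
  have hsq : ‖u'‖ ^ 2 ≤ ‖u‖ ^ 2 := by linarith
  exact (pow_le_pow_iff_left₀ (norm_nonneg _) (norm_nonneg _) two_ne_zero).mp hsq

theorem antitone_norm_of_weighted_scheme (hA : ∀ x, ⟪A x, x⟫ ≤ 0) (hτ : 0 ≤ τ)
    (hσ : 1 / 2 ≤ σ) {u : ℕ → H}
    (hu : ∀ n, u (n + 1) - (σ * τ) • A (u (n + 1)) = u n + ((1 - σ) * τ) • A (u n)) :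
    Antitone fun n => ‖u n‖ :=
  antitone_nat_of_succ_le fun n => norm_le_of_weighted_step A hA hτ hσ (hu n)

end WeightedScheme

theorem weighted_scheme_absolute_stability_general
    {H : Type*} [NormedAddCommGroup H] [InnerProductSpace ℝ H]
    (A : H →L[ℝ] H)
    (hnonpos : ∀ x : H, ⟪A x, x⟫ ≤ 0)
    (τ : ℝ) (hτ : 0 < τ) (σ : ℝ) (hσ : (1 : ℝ) / 2 ≤ σ) :
    (∀ u u' : H,
        u' - (σ * τ) • A u' = u + ((1 - σ) * τ) • A u → ‖u'‖ ≤ ‖u‖) ∧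
      ∀ u : ℕ → H,
        (∀ n : ℕ, u (n + 1) - (σ * τ) • A (u (n + 1))
            = u n + ((1 - σ) * τ) • A (u n)) →
        ∀ n : ℕ, ‖u (n + 1)‖ ≤ ‖u n‖ ∧ ‖u n‖ ≤ ‖u 0‖ := by
  refine ⟨fun u u' h => norm_le_of_weighted_step (A : H →ₗ[ℝ] H) hnonpos hτ.le hσ h,
    fun u hu n => ?_⟩
  have hanti := antitone_norm_of_weighted_scheme (A : H →ₗ[ℝ] H) hnonpos hτ.le hσ hu
  exact ⟨hanti n.le_succ, hanti n.zero_le⟩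

/-- Absolute stability of the weighted scheme: if `A` is bounded, self-adjoint and
nonpositive on a real Hilbert space, `τ > 0` and `σ ≥ 1/2`, then any one step
`u' - στ A u' = u + (1-σ)τ A u` of the scheme satisfies `‖u'‖ ≤ ‖u‖`, and hence any
sequence of iterates is nonincreasing in norm, with `‖uⁿ‖ ≤ ‖u⁰‖`. -/
theorem weighted_scheme_absolute_stability
    {H : Type*} [NormedAddCommGroup H] [InnerProductSpace ℝ H] [CompleteSpace H]
    (A : H →L[ℝ] H)
    (hsa : ∀ x y : H, ⟪A x, y⟫ = ⟪x, A y⟫)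
    (hnonpos : ∀ x : H, ⟪A x, x⟫ ≤ 0)
    (τ : ℝ) (hτ : 0 < τ) (σ : ℝ) (hσ : (1 : ℝ) / 2 ≤ σ) :
    (∀ u u' : H,
        u' - (σ * τ) • A u' = u + ((1 - σ) * τ) • A u → ‖u'‖ ≤ ‖u‖) ∧
      ∀ u : ℕ → H,
        (∀ n : ℕ, u (n + 1) - (σ * τ) • A (u (n + 1))
            = u n + ((1 - σ) * τ) • A (u n)) →
        ∀ n : ℕ, ‖u (n + 1)‖ ≤ ‖u n‖ ∧ ‖u n‖ ≤ ‖u 0‖ :=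
  weighted_scheme_absolute_stability_general A hnonpos τ hτ σ hσ
end

section
/- Let H be a real Hilbert space and let A : H →L[ℝ] H be a bounded self-adjoint linear operator with ⟨A x, x⟩ ≤ 0 for all x ∈ H. Then for every t ≥ 0 the operator exponential exp(t·A) is a contraction: ‖exp(t·A) x‖ ≤ ‖x‖ for all x ∈ H. -/
open scoped RealInnerProductSpace

/-! The orbit `g s = exp (s • A) x` solves `g' = A g`, so `d/ds ‖g s‖² = 2 ⟪A (g s), g s⟫ ≤ 0`:
the norm of the orbit is antitone in `s`, and `g 0 = x`. -/

theorem antitone_norm_of_hasDerivAt_of_inner_nonpos {E : Type*} [NormedAddCommGroup E]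
    [InnerProductSpace ℝ E] {g g' : ℝ → E} (hg : ∀ s, HasDerivAt g (g' s) s)
    (hinner : ∀ s, ⟪g s, g' s⟫ ≤ 0) : Antitone fun s => ‖g s‖ := by
  have hsq : Antitone fun s => ‖g s‖ ^ 2 :=
    antitone_of_hasDerivAt_nonpos (f' := fun s => 2 * ⟪g s, g' s⟫) (fun s => (hg s).norm_sq)
      fun s => mul_nonpos_of_nonneg_of_nonpos zero_le_two (hinner s)
  intro s t hst
  exact (sq_le_sq₀ (norm_nonneg _) (norm_nonneg _)).mp (hsq hst)

theorem hasDerivAt_exp_smul_apply {E : Type*} [NormedAddCommGroup E] [NormedSpace ℝ E]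
    [CompleteSpace E] (A : E →L[ℝ] E) (x : E) (s : ℝ) :
    HasDerivAt (fun u : ℝ => NormedSpace.exp (u • A) x) (A (NormedSpace.exp (s • A) x)) s := by
  simpa using (hasDerivAt_exp_smul_const' A s).clm_apply (hasDerivAt_const s x)

theorem antitone_norm_exp_smul_apply {H : Type*} [NormedAddCommGroup H]
    [InnerProductSpace ℝ H] [CompleteSpace H] (A : H →L[ℝ] H)
    (hnonpos : ∀ x : H, ⟪A x, x⟫ ≤ 0) (x : H) :
    Antitone fun s : ℝ => ‖NormedSpace.exp (s • A) x‖ :=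
  antitone_norm_of_hasDerivAt_of_inner_nonpos (hasDerivAt_exp_smul_apply A x) fun s => by
    rw [real_inner_comm]
    exact hnonpos _

theorem exp_nonpos_selfAdjoint_contraction_general
    {H : Type*} [NormedAddCommGroup H] [InnerProductSpace ℝ H] [CompleteSpace H]
    (A : H →L[ℝ] H)
    (hnonpos : ∀ x : H, ⟪A x, x⟫ ≤ 0) :
    ∀ t : ℝ, 0 ≤ t → ∀ x : H, ‖(NormedSpace.exp (t • A)) x‖ ≤ ‖x‖ := by
  intro t ht x
  simpa [NormedSpace.exp_zero] using antitone_norm_exp_smul_apply A hnonpos x ht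

/-- Contraction property of the semigroup generated by a bounded self-adjoint
nonpositive operator `A` on a real Hilbert space: for every `t ≥ 0`,
`‖exp(tA) x‖ ≤ ‖x‖` for all `x`. -/
theorem exp_nonpos_selfAdjoint_contraction
    {H : Type*} [NormedAddCommGroup H] [InnerProductSpace ℝ H] [CompleteSpace H]
    (A : H →L[ℝ] H)
    (hsa : ∀ x y : H, ⟪A x, y⟫ = ⟪x, A y⟫)
    (hnonpos : ∀ x : H, ⟪A x, x⟫ ≤ 0) :
    ∀ t : ℝ, 0 ≤ t → ∀ x : H, ‖(NormedSpace.exp (t • A)) x‖ ≤ ‖x‖ :=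
  exp_nonpos_selfAdjoint_contraction_general A hnonpos
end

section
/- Let X be a real Banach space, A, B : X →L[ℝ] X bounded linear operators, c₀ ∈ X, and let c(t) = exp(t·(A+B)) c₀ be the exact solution of c' = (A+B)c, c(0) = c₀. Let c_prev : ℝ → X be continuous and define the splitting iterate c_next(t) = exp(t·A) c₀ + ∫₀ᵗ exp((t-s)·A) (B (c_prev s)) ds. Then for all t ≥ 0 the error satisfies the integral identity c_next(t) - c(t) = ∫₀ᵗ exp((t-s)·A) (B (c_prev(s) - c(s))) ds. -/
/-!
Both `c_next` and `c` solve `u' = A u + (forcing)` with `u(0) = c₀`, the forcing being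
`B c_prev` and `B c` respectively, so the claim reduces to Duhamel's formula
`exp(t(A+B)) c₀ - exp(tA) c₀ = ∫₀ᵗ exp((t-s)A) B exp(s(A+B)) c₀ ds`. This follows from the
fundamental theorem of calculus applied to `s ↦ exp((t-s)A) exp(s(A+B)) c₀`, whose derivative
is `exp((t-s)A) (-A + (A+B)) exp(s(A+B)) c₀`.
-/

open NormedSpace intervalIntegral

theorem hasDerivAt_exp_sub_smul {𝔸 : Type*} [NormedRing 𝔸] [NormedAlgebra ℝ 𝔸] [CompleteSpace 𝔸]
    (a : 𝔸) (t s : ℝ) :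
    HasDerivAt (fun u : ℝ => exp ((t - u) • a)) (-(exp ((t - s) • a) * a)) s := by
  have h := (hasDerivAt_exp_smul_const (𝕂 := ℝ) a (t - s)).scomp s ((hasDerivAt_id s).const_sub t)
  rwa [neg_one_smul] at h

section Operators

variable {X : Type*} [NormedAddCommGroup X] [NormedSpace ℝ X] [CompleteSpace X]

theorem continuous_exp_sub_smul_apply (A : X →L[ℝ] X) (t : ℝ) {f : ℝ → X} (hf : Continuous f) :
    Continuous fun s : ℝ => exp ((t - s) • A) (f s) :=
  ((differentiable_exp_smul_const ℝ A).continuous.comp (continuous_sub_left t)).clm_apply hf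

theorem hasDerivAt_exp_sub_smul_apply_exp_add_smul (A B : X →L[ℝ] X) (x : X) (t s : ℝ) :
    HasDerivAt (fun u : ℝ => exp ((t - u) • A) (exp (u • (A + B)) x))
      (exp ((t - s) • A) (B (exp (s • (A + B)) x))) s := by
  have hc : HasDerivAt (fun u : ℝ => exp (u • (A + B)) x)
      ((A + B) (exp (s • (A + B)) x)) s := by
    simpa using (hasDerivAt_exp_smul_const' (𝕂 := ℝ) (A + B) s).clm_apply (hasDerivAt_const s x)
  convert (hasDerivAt_exp_sub_smul A t s).clm_apply hc using 1
  simp only [neg_apply, mul_apply_eq_comp, add_apply, map_add]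
  abel

/-- Duhamel's formula for the perturbation `A ↦ A + B`. -/
theorem integral_exp_sub_smul_apply_exp_add_smul (A B : X →L[ℝ] X) (x : X) (t : ℝ) :
    ∫ s in (0 : ℝ)..t, exp ((t - s) • A) (B (exp (s • (A + B)) x)) =
      exp (t • (A + B)) x - exp (t • A) x := by
  have hcont : Continuous fun s : ℝ => exp (s • (A + B)) x :=
    (differentiable_exp_smul_const ℝ (A + B)).continuous.clm_apply continuous_const
  rw [integral_eq_sub_of_hasDerivAt
    (fun s _ => hasDerivAt_exp_sub_smul_apply_exp_add_smul A B x t s)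
    ((continuous_exp_sub_smul_apply A t (B.continuous.comp hcont)).intervalIntegrable 0 t)]
  simp

end Operators

/-- Error recursion of the iterative splitting method: with the exact solution
`c(t) = exp(t(A+B)) c₀` and splitting iterate
`c_next(t) = exp(tA) c₀ + ∫₀ᵗ exp((t-s)A) B c_prev(s) ds`, one has
`c_next(t) - c(t) = ∫₀ᵗ exp((t-s)A) B (c_prev(s) - c(s)) ds` for all `t ≥ 0`. -/
theorem iterative_splitting_error_integral_identity
    {X : Type*} [NormedAddCommGroup X] [NormedSpace ℝ X] [CompleteSpace X]
    (A B : X →L[ℝ] X) (c₀ : X) (c_prev : ℝ → X) (hc_prev : Continuous c_prev) :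
    let c : ℝ → X := fun t => NormedSpace.exp (t • (A + B)) c₀
    let c_next : ℝ → X := fun t =>
      NormedSpace.exp (t • A) c₀ +
        ∫ s in (0 : ℝ)..t, NormedSpace.exp ((t - s) • A) (B (c_prev s))
    ∀ t : ℝ, 0 ≤ t →
      c_next t - c t = ∫ s in (0 : ℝ)..t, NormedSpace.exp ((t - s) • A) (B (c_prev s - c s)) := by
  intro c c_next t _
  have hc : Continuous c :=
    (differentiable_exp_smul_const ℝ (A + B)).continuous.clm_apply continuous_const
  have integrable_of_continuous {f : ℝ → X} (hf : Continuous f) :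
      IntervalIntegrable (fun s => exp ((t - s) • A) (B (f s))) MeasureTheory.volume 0 t :=
    (continuous_exp_sub_smul_apply A t (B.continuous.comp hf)).intervalIntegrable 0 t
  simp only [map_sub]
  rw [integral_sub (integrable_of_continuous hc_prev) (integrable_of_continuous hc),
    integral_exp_sub_smul_apply_exp_add_smul]
  simp only [c_next, c]
  abel
end

section
/- Let X be a real Banach space, A, B : X →L[ℝ] X bounded linear operators, c₀ ∈ X, τ > 0, and let c(t) = exp(t·(A+B)) c₀. Let c_prev : ℝ → X be continuous and define c_next(t) = exp(t·A) c₀ + ∫₀ᵗ exp((t-s)·A) (B (c_prev s)) ds. Then sup over t ∈ [0, τ] of ‖c_next(t) - c(t)‖ is at most τ · ‖B‖ · exp(τ·‖A‖) · (sup over s ∈ [0, τ] of ‖c_prev(s) - c(s)‖). -/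
/-!
Variation of constants writes the exact solution as
`c(t) = exp(tA) c₀ + ∫₀ᵗ exp((t-s)A) B c(s) ds`, so `c_next - c` is the same Duhamel integral
applied to `c_prev - c`. For `0 ≤ s ≤ t ≤ τ` its integrand is bounded by
`exp(τ‖A‖) ‖B‖ sup ‖c_prev - c‖`, using `‖exp x‖ ≤ exp ‖x‖` from the power series, and the
interval of integration has length at most `τ`.
-/

open NormedSpace

section ExpBounds

variable {𝔸 : Type*} [NormedRing 𝔸] [NormedAlgebra ℝ 𝔸]

theorem norm_exp_le_exp_norm (h₁ : ‖(1 : 𝔸)‖ ≤ 1) (x : 𝔸) : ‖exp x‖ ≤ Real.exp ‖x‖ := by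
  have hpow (n : ℕ) : ‖x ^ n‖ ≤ ‖x‖ ^ n := by
    rcases n.eq_zero_or_pos with rfl | hn
    · simpa using h₁
    · exact norm_pow_le' x hn
  rw [exp_eq_tsum ℝ, Real.exp_eq_exp_ℝ, exp_eq_tsum_div]
  refine tsum_of_norm_bounded (Real.summable_pow_div_factorial _).hasSum fun n => ?_
  rw [norm_smul, norm_inv, Real.norm_natCast, inv_mul_eq_div]
  gcongr
  exact hpow n

@[fun_prop]
theorem continuous_exp_of_normedAlgebra_real [CompleteSpace 𝔸] : Continuous (exp : 𝔸 → 𝔸) :=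
  continuous_iff_continuousAt.2 fun x => (exp_analytic (𝕂 := ℝ) x).continuousAt

theorem norm_exp_smul_le_of_le (h₁ : ‖(1 : 𝔸)‖ ≤ 1) (a : 𝔸) {r τ : ℝ} (hr : 0 ≤ r) (hrτ : r ≤ τ) :
    ‖exp (r • a)‖ ≤ Real.exp (τ * ‖a‖) := by
  refine (norm_exp_le_exp_norm h₁ _).trans (Real.exp_le_exp.2 ?_)
  rw [norm_smul, Real.norm_of_nonneg hr]
  gcongr

end ExpBounds

namespace ContinuousLinearMap

variable {X : Type*} [NormedAddCommGroup X] [NormedSpace ℝ X]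

noncomputable def duhamelIntegral (A B : X →L[ℝ] X) (u : ℝ → X) (t : ℝ) : X :=
  ∫ s in (0 : ℝ)..t, exp ((t - s) • A) (B (u s))

variable {A B : X →L[ℝ] X}

theorem norm_duhamelIntegral_le {u : ℝ → X} {τ t M : ℝ} (ht : t ∈ Set.Icc 0 τ)
    (hu : ∀ s ∈ Set.Icc 0 τ, ‖u s‖ ≤ M) :
    ‖duhamelIntegral A B u t‖ ≤ τ * ‖B‖ * Real.exp (τ * ‖A‖) * M := by
  have hM : 0 ≤ M := (norm_nonneg _).trans (hu 0 ⟨le_rfl, ht.1.trans ht.2⟩)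
  have hbound : ∀ s ∈ Set.uIoc 0 t,
      ‖exp ((t - s) • A) (B (u s))‖ ≤ ‖B‖ * Real.exp (τ * ‖A‖) * M := by
    intro s hs
    rw [Set.uIoc_of_le ht.1] at hs
    have hexp : ‖exp ((t - s) • A)‖ ≤ Real.exp (τ * ‖A‖) :=
      norm_exp_smul_le_of_le (by simpa [one_def] using norm_id_le) A (by linarith [hs.2])
        (by linarith [hs.1, ht.2])
    calc ‖exp ((t - s) • A) (B (u s))‖ ≤ ‖exp ((t - s) • A)‖ * (‖B‖ * ‖u s‖) :=
          (le_opNorm _ _).trans (by gcongr; exact le_opNorm _ _)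
      _ ≤ Real.exp (τ * ‖A‖) * (‖B‖ * M) := by
          gcongr
          exact hu s ⟨hs.1.le, hs.2.trans ht.2⟩
      _ = ‖B‖ * Real.exp (τ * ‖A‖) * M := by ring
  calc ‖duhamelIntegral A B u t‖ ≤ ‖B‖ * Real.exp (τ * ‖A‖) * M * t := by
        simpa [duhamelIntegral, abs_of_nonneg ht.1] using
          intervalIntegral.norm_integral_le_of_norm_le_const hbound
    _ ≤ ‖B‖ * Real.exp (τ * ‖A‖) * M * τ := by gcongr; exact ht.2
    _ = τ * ‖B‖ * Real.exp (τ * ‖A‖) * M := by ring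

variable [CompleteSpace X]

variable (A B) in
theorem exp_smul_add_apply_eq_add_duhamelIntegral (c₀ : X) (t : ℝ) :
    exp (t • (A + B)) c₀ =
      exp (t • A) c₀ + duhamelIntegral A B (fun s => exp (s • (A + B)) c₀) t := by
  have hderiv (s : ℝ) : HasDerivAt (fun s => exp ((t - s) • A) (exp (s • (A + B)) c₀))
      (exp ((t - s) • A) (B (exp (s • (A + B)) c₀))) s := by
    have hA : HasDerivAt (fun s : ℝ => exp ((t - s) • A)) ((-1 : ℝ) • (exp ((t - s) • A) * A)) s :=
      (hasDerivAt_exp_smul_const A (t - s)).scomp s ((hasDerivAt_id s).const_sub t)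
    have hAB : HasDerivAt (fun s : ℝ => exp (s • (A + B)) c₀)
        (((A + B) * exp (s • (A + B))) c₀) s := by
      simpa using (hasDerivAt_exp_smul_const' (A + B) s).clm_apply (hasDerivAt_const s c₀)
    convert hA.clm_apply hAB using 1
    simp only [neg_smul, one_smul, neg_apply, mul_apply_eq_comp, add_apply, map_add,
      neg_add_cancel_left]
  have hcont : Continuous fun s => exp ((t - s) • A) (B (exp (s • (A + B)) c₀)) := by fun_prop
  rw [duhamelIntegral, intervalIntegral.integral_eq_sub_of_hasDerivAt (fun s _ => hderiv s)
    (hcont.intervalIntegrable 0 t)]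
  simp

theorem duhamelIntegral_sub {u v : ℝ → X} (hu : Continuous u) (hv : Continuous v) (t : ℝ) :
    duhamelIntegral A B u t - duhamelIntegral A B v t = duhamelIntegral A B (u - v) t := by
  simp only [duhamelIntegral, ← intervalIntegral.integral_sub
    ((by fun_prop : Continuous fun s => exp ((t - s) • A) (B (u s))).intervalIntegrable 0 t)
    ((by fun_prop : Continuous fun s => exp ((t - s) • A) (B (v s))).intervalIntegrable 0 t),
    Pi.sub_apply, map_sub]

end ContinuousLinearMap

open ContinuousLinearMap in
/-- One-step error contraction of the iterative splitting method: with
`c(t) = exp(t(A+B)) c₀` and `c_next(t) = exp(tA) c₀ + ∫₀ᵗ exp((t-s)A) B c_prev(s) ds`,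
the sup over `[0, τ]` of `‖c_next - c‖` is at most
`τ ‖B‖ exp(τ‖A‖)` times the sup over `[0, τ]` of `‖c_prev - c‖`. -/
theorem iterative_splitting_one_step_error_bound
    {X : Type*} [NormedAddCommGroup X] [NormedSpace ℝ X] [CompleteSpace X]
    (A B : X →L[ℝ] X) (c₀ : X) (τ : ℝ) (hτ : 0 < τ)
    (c_prev : ℝ → X) (hc_prev : Continuous c_prev) :
    let c : ℝ → X := fun t => NormedSpace.exp (t • (A + B)) c₀
    let c_next : ℝ → X := fun t =>
      NormedSpace.exp (t • A) c₀ +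
        ∫ s in (0 : ℝ)..t, NormedSpace.exp ((t - s) • A) (B (c_prev s))
    sSup ((fun t => ‖c_next t - c t‖) '' Set.Icc (0 : ℝ) τ) ≤
      τ * ‖B‖ * Real.exp (τ * ‖A‖) *
        sSup ((fun s => ‖c_prev s - c s‖) '' Set.Icc (0 : ℝ) τ) := by
  intro c c_next
  have hc : Continuous c := by fun_prop
  have herror (t : ℝ) : c_next t - c t = duhamelIntegral A B (c_prev - c) t := by
    change exp (t • A) c₀ + duhamelIntegral A B c_prev t - exp (t • (A + B)) c₀ = _
    rw [exp_smul_add_apply_eq_add_duhamelIntegral A B c₀ t, add_sub_add_left_eq_sub,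
      duhamelIntegral_sub hc_prev hc]
  have hbdd : BddAbove ((fun s => ‖c_prev s - c s‖) '' Set.Icc 0 τ) :=
    (isCompact_Icc.image (by fun_prop)).bddAbove
  refine csSup_le ((Set.nonempty_Icc.2 hτ.le).image _) ?_
  rintro _ ⟨t, ht, rfl⟩
  change ‖c_next t - c t‖ ≤ _
  rw [herror]
  exact norm_duhamelIntegral_le ht fun s hs => le_csSup hbdd ⟨s, hs, rfl⟩
end

section
/- Let X be a real Banach space, let A₁, A₂ : X →L[ℝ] X be bounded linear operators, let Q ∈ X and C₀ ∈ X. Then the function C(t) = exp(t·(A₁+A₂)) C₀ + ∫₀ᵗ exp((t-s)·(A₁+A₂)) Q ds is the unique continuous fixed point on [0, τ] (for any τ > 0 with τ·‖A₂‖·exp(τ‖A₁‖) < 1) of the map Φ given by (Φ v)(t) = exp(t·A₁) C₀ + ∫₀ᵗ exp((t-s)·A₁) (A₂ (v s) + Q) ds; equivalently, the limit of the fixed-point splitting iteration is the exact solution of ∂_t C = (A₁+A₂) C + Q with C(0) = C₀. -/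
/-! The Duhamel solution `C` of `C' = (A₁ + A₂) C + Q` also solves `C' = A₁ C + (A₂ C + Q)`, so the
variation-of-constants formula for `A₁` alone says exactly that `Φ C = C`. For uniqueness, the
difference of two continuous fixed points is `∫₀ᵗ exp((t - s) A₁) A₂ (v s - w s) ds`, whose norm on
`[0, τ]` is at most `τ ‖A₂‖ exp(τ ‖A₁‖) < 1` times its own maximum there; hence it vanishes. -/

open NormedSpace Set

theorem norm_exp_le_real_exp_norm {𝔸 : Type*} [NormedRing 𝔸] [NormedAlgebra ℝ 𝔸]
    [CompleteSpace 𝔸] (h1 : ‖(1 : 𝔸)‖ ≤ 1) (x : 𝔸) : ‖exp x‖ ≤ Real.exp ‖x‖ := by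
  rw [exp_eq_tsum ℝ, Real.exp_eq_exp_ℝ, exp_eq_tsum ℝ]
  refine (norm_tsum_le_tsum_norm (norm_expSeries_summable' x)).trans <|
    Summable.tsum_le_tsum (fun n => ?_) (norm_expSeries_summable' x) (expSeries_summable' ‖x‖)
  rw [norm_smul, smul_eq_mul, norm_inv, Real.norm_natCast]
  gcongr
  cases n with
  | zero => simpa using h1
  | succ n => exact norm_pow_le' x n.succ_pos

theorem IsCompact.eqOn_zero_of_norm_le_mul {α X : Type*} [TopologicalSpace α]
    [NormedAddCommGroup X] {K : Set α} (hK : IsCompact K) {w : α → X} (hw : ContinuousOn w K)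
    {k : ℝ} (hk : k < 1) (h : ∀ M, (∀ x ∈ K, ‖w x‖ ≤ M) → ∀ x ∈ K, ‖w x‖ ≤ k * M) :
    EqOn w 0 K := by
  intro x hx
  obtain ⟨x₀, hx₀, hmax⟩ := hK.exists_isMaxOn ⟨x, hx⟩ hw.norm
  have hM : ‖w x₀‖ ≤ k * ‖w x₀‖ := h _ (fun y hy => hmax hy) x₀ hx₀
  have hM0 : ‖w x₀‖ ≤ 0 := by nlinarith [norm_nonneg (w x₀)]
  exact norm_le_zero_iff.1 ((hmax hx).trans hM0)

section

variable {X : Type*} [NormedAddCommGroup X] [NormedSpace ℝ X]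

noncomputable def duhamel (B : X →L[ℝ] X) (Q C₀ : X) (t : ℝ) : X :=
  exp (t • B) C₀ + ∫ s in (0 : ℝ)..t, exp ((t - s) • B) Q

noncomputable def splittingMap (A₁ A₂ : X →L[ℝ] X) (Q C₀ : X) (v : ℝ → X) (t : ℝ) : X :=
  exp (t • A₁) C₀ + ∫ s in (0 : ℝ)..t, exp ((t - s) • A₁) (A₂ (v s) + Q)

theorem duhamel_eq (B : X →L[ℝ] X) (Q C₀ : X) (t : ℝ) :
    duhamel B Q C₀ t = exp (t • B) C₀ + ∫ s in (0 : ℝ)..t, exp (s • B) Q := by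
  rw [duhamel, intervalIntegral.integral_comp_sub_left (fun s => exp (s • B) Q) t]
  simp

variable [CompleteSpace X]

theorem continuous_exp_smul (B : X →L[ℝ] X) : Continuous fun t : ℝ => exp (t • B) :=
  (differentiable_exp_smul_const ℝ B).continuous

theorem norm_exp_smul_le {B : X →L[ℝ] X} {r τ : ℝ} (hr : r ∈ Icc 0 τ) :
    ‖exp (r • B)‖ ≤ Real.exp (τ * ‖B‖) := by
  refine (norm_exp_le_real_exp_norm ContinuousLinearMap.norm_id_le _).trans ?_
  rw [norm_smul, Real.norm_of_nonneg hr.1]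
  gcongr
  exact hr.2

theorem hasDerivAt_exp_smul_apply_s12 (B : X →L[ℝ] X) (v : X) (t : ℝ) :
    HasDerivAt (fun u : ℝ => exp (u • B) v) (B (exp (t • B) v)) t := by
  simpa using (hasDerivAt_exp_smul_const' (𝕂 := ℝ) B t).clm_apply (hasDerivAt_const t v)

theorem hasDerivAt_exp_sub_smul_apply (B : X →L[ℝ] X) {u : ℝ → X} {u' : X} {t s : ℝ}
    (hu : HasDerivAt u u' s) :
    HasDerivAt (fun r => exp ((t - r) • B) (u r)) (exp ((t - s) • B) (u' - B (u s))) s := by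
  have hexp : HasDerivAt (fun r : ℝ => exp ((t - r) • B)) (-(B * exp ((t - s) • B))) s := by
    simpa [Function.comp_def] using (hasDerivAt_exp_smul_const' (𝕂 := ℝ) B (t - s)).scomp s
      ((hasDerivAt_id s).const_sub t)
  convert hexp.clm_apply hu using 1
  -- `B` commutes with its own exponential
  rw [(((Commute.refl B).smul_right (t - s)).exp_right).eq]
  simp [map_sub]
  abel

-- variation of constants
theorem eq_exp_smul_apply_add_integral {A : X →L[ℝ] X} {u f : ℝ → X}
    (hu : ∀ s, HasDerivAt u (A (u s) + f s) s) (hf : Continuous f) (t : ℝ) :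
    u t = exp (t • A) (u 0) + ∫ s in (0 : ℝ)..t, exp ((t - s) • A) (f s) := by
  have hderiv : ∀ s,
      HasDerivAt (fun r => exp ((t - r) • A) (u r)) (exp ((t - s) • A) (f s)) s :=
    fun s => by simpa using hasDerivAt_exp_sub_smul_apply A (t := t) (hu s)
  have hcont : Continuous fun s => exp ((t - s) • A) (f s) :=
    ((continuous_exp_smul A).comp (continuous_const.sub continuous_id)).clm_apply hf
  rw [intervalIntegral.integral_eq_sub_of_hasDerivAt (fun s _ => hderiv s)
    (hcont.intervalIntegrable 0 t)]
  simp

theorem hasDerivAt_duhamel (B : X →L[ℝ] X) (Q C₀ : X) (t : ℝ) :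
    HasDerivAt (duhamel B Q C₀) (B (duhamel B Q C₀ t) + Q) t := by
  have hc : Continuous fun s : ℝ => exp (s • B) Q :=
    (continuous_exp_smul B).clm_apply continuous_const
  have hint : HasDerivAt (fun u : ℝ => ∫ s in (0 : ℝ)..u, exp (s • B) Q) (exp (t • B) Q) t :=
    intervalIntegral.integral_hasDerivAt_right (hc.intervalIntegrable 0 t)
      (hc.stronglyMeasurableAtFilter _ _) hc.continuousAt
  have hB : B (∫ s in (0 : ℝ)..t, exp (s • B) Q) = exp (t • B) Q - Q := by
    rw [← B.intervalIntegral_comp_comm (hc.intervalIntegrable 0 t),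
      intervalIntegral.integral_eq_sub_of_hasDerivAt (fun s _ => hasDerivAt_exp_smul_apply_s12 B Q s)
        ((B.continuous.comp hc).intervalIntegrable 0 t)]
    simp
  rw [funext (duhamel_eq B Q C₀)]
  refine ((hasDerivAt_exp_smul_apply_s12 B C₀ t).add hint).congr_deriv ?_
  rw [map_add, hB]
  abel

theorem continuous_duhamel (B : X →L[ℝ] X) (Q C₀ : X) : Continuous (duhamel B Q C₀) :=
  continuous_iff_continuousAt.2 fun t => (hasDerivAt_duhamel B Q C₀ t).continuousAt

theorem splittingMap_duhamel (A₁ A₂ : X →L[ℝ] X) (Q C₀ : X) :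
    splittingMap A₁ A₂ Q C₀ (duhamel (A₁ + A₂) Q C₀) = duhamel (A₁ + A₂) Q C₀ := by
  have hu : ∀ s, HasDerivAt (duhamel (A₁ + A₂) Q C₀)
      (A₁ (duhamel (A₁ + A₂) Q C₀ s) + (A₂ (duhamel (A₁ + A₂) Q C₀ s) + Q)) s := fun s => by
    simpa [add_assoc] using hasDerivAt_duhamel (A₁ + A₂) Q C₀ s
  funext t
  rw [eq_exp_smul_apply_add_integral hu
    ((A₂.continuous.comp (continuous_duhamel _ Q C₀)).add continuous_const) t]
  simp [splittingMap, duhamel]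

theorem splittingMap_sub_splittingMap (A₁ A₂ : X →L[ℝ] X) (Q C₀ : X) {v w : ℝ → X}
    (hv : Continuous v) (hw : Continuous w) (t : ℝ) :
    splittingMap A₁ A₂ Q C₀ v t - splittingMap A₁ A₂ Q C₀ w t =
      ∫ s in (0 : ℝ)..t, exp ((t - s) • A₁) (A₂ (v s - w s)) := by
  have hint : ∀ {u : ℝ → X}, Continuous u →
      IntervalIntegrable (fun s => exp ((t - s) • A₁) (A₂ (u s) + Q)) MeasureTheory.volume 0 t :=
    fun hu => (((continuous_exp_smul A₁).comp (continuous_const.sub continuous_id)).clm_apply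
      ((A₂.continuous.comp hu).add continuous_const)).intervalIntegrable 0 t
  rw [splittingMap, splittingMap, add_sub_add_left_eq_sub,
    ← intervalIntegral.integral_sub (hint hv) (hint hw)]
  simp only [← map_sub, add_sub_add_right_eq_sub]

theorem norm_splittingMap_sub_le (A₁ A₂ : X →L[ℝ] X) (Q C₀ : X) {v w : ℝ → X}
    (hv : Continuous v) (hw : Continuous w) {τ M t : ℝ} (ht : t ∈ Icc 0 τ)
    (hM : ∀ s ∈ Icc 0 τ, ‖v s - w s‖ ≤ M) :
    ‖splittingMap A₁ A₂ Q C₀ v t - splittingMap A₁ A₂ Q C₀ w t‖ ≤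
      τ * ‖A₂‖ * Real.exp (τ * ‖A₁‖) * M := by
  have hM0 : 0 ≤ M := (norm_nonneg _).trans (hM t ht)
  rw [splittingMap_sub_splittingMap A₁ A₂ Q C₀ hv hw]
  calc ‖∫ s in (0 : ℝ)..t, exp ((t - s) • A₁) (A₂ (v s - w s))‖
      ≤ Real.exp (τ * ‖A₁‖) * (‖A₂‖ * M) * |t - 0| := by
        refine intervalIntegral.norm_integral_le_of_norm_le_const fun s hs => ?_
        rw [uIoc_of_le ht.1] at hs
        have hts : t - s ∈ Icc 0 τ := ⟨by linarith [hs.2], by linarith [hs.1, ht.2]⟩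
        refine (ContinuousLinearMap.le_opNorm _ _).trans ?_
        gcongr
        · exact norm_exp_smul_le hts
        · exact (A₂.le_opNorm _).trans
            (by gcongr; exact hM s ⟨hs.1.le, hs.2.trans ht.2⟩)
    _ ≤ Real.exp (τ * ‖A₁‖) * (‖A₂‖ * M) * τ := by
        rw [sub_zero, abs_of_nonneg ht.1]
        gcongr
        exact ht.2
    _ = τ * ‖A₂‖ * Real.exp (τ * ‖A₁‖) * M := by ring

theorem eqOn_of_splittingMap_eqOn_self (A₁ A₂ : X →L[ℝ] X) (Q C₀ : X) {τ : ℝ}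
    (hτ : τ * ‖A₂‖ * Real.exp (τ * ‖A₁‖) < 1) {v w : ℝ → X} (hv : Continuous v)
    (hw : Continuous w) (hvfix : EqOn (splittingMap A₁ A₂ Q C₀ v) v (Icc 0 τ))
    (hwfix : EqOn (splittingMap A₁ A₂ Q C₀ w) w (Icc 0 τ)) :
    EqOn v w (Icc 0 τ) := by
  have hzero : EqOn (v - w) 0 (Icc 0 τ) := by
    refine isCompact_Icc.eqOn_zero_of_norm_le_mul (hv.sub hw).continuousOn hτ
      fun M hM t ht => ?_
    rw [Pi.sub_apply, ← hvfix ht, ← hwfix ht]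
    exact norm_splittingMap_sub_le A₁ A₂ Q C₀ hv hw ht hM
  exact fun t ht => sub_eq_zero.1 (hzero ht)

end

/-- The exact Duhamel solution `C(t) = exp(t(A₁+A₂)) C₀ + ∫₀ᵗ exp((t-s)(A₁+A₂)) Q ds`
of `∂ₜC = (A₁+A₂)C + Q`, `C(0) = C₀` is the unique continuous fixed point on `[0, τ]`
(for any `τ > 0` with `τ‖A₂‖ exp(τ‖A₁‖) < 1`) of the splitting fixed-point map
`Φ v (t) = exp(tA₁) C₀ + ∫₀ᵗ exp((t-s)A₁) (A₂ v(s) + Q) ds`. -/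
theorem splitting_fixed_point_is_exact_solution
    {X : Type*} [NormedAddCommGroup X] [NormedSpace ℝ X] [CompleteSpace X]
    (A₁ A₂ : X →L[ℝ] X) (Q C₀ : X)
    (Φ : (ℝ → X) → (ℝ → X))
    (hΦ : ∀ v : ℝ → X, ∀ t : ℝ, Φ v t =
      NormedSpace.exp (t • A₁) C₀ +
        ∫ s in (0 : ℝ)..t, NormedSpace.exp ((t - s) • A₁) (A₂ (v s) + Q)) :
    let C : ℝ → X := fun t =>
      NormedSpace.exp (t • (A₁ + A₂)) C₀ +
        ∫ s in (0 : ℝ)..t, NormedSpace.exp ((t - s) • (A₁ + A₂)) Q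
    ∀ τ : ℝ, 0 < τ → τ * ‖A₂‖ * Real.exp (τ * ‖A₁‖) < 1 →
      (∀ t ∈ Set.Icc (0 : ℝ) τ, Φ C t = C t) ∧
        ∀ g : ℝ → X, Continuous g → (∀ t ∈ Set.Icc (0 : ℝ) τ, Φ g t = g t) →
          ∀ t ∈ Set.Icc (0 : ℝ) τ, g t = C t := by
  intro C τ _ hτ
  obtain rfl : Φ = splittingMap A₁ A₂ Q C₀ := funext fun v => funext (hΦ v)
  have hC : splittingMap A₁ A₂ Q C₀ C = C := splittingMap_duhamel A₁ A₂ Q C₀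
  exact ⟨fun t _ => congrFun hC t, fun g hg hgfix =>
    eqOn_of_splittingMap_eqOn_self A₁ A₂ Q C₀ hτ hg (continuous_duhamel _ Q C₀) hgfix
      fun t _ => congrFun hC t⟩
end
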